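/- arXiv:math/0406432 — 3 statements merged into one kernel-verified Lean document; each statement's English description precedes it below -/
import Mathlib

section
/- Let φ₀, φ₁, φ₂, … be identically distributed real random variables with E[log⁺|φ₀|] < ∞. Then for every z with |z| < 1, the series ∑_{k≥1} φ_k z^k converges almost surely. -/
/-!
Pick `c > 1` with `c |z| < 1`. Since `|φ_k| > c^k` forces `log⁺ |φ_k| / log c > k`, identical
distribution bounds `∑ P(|φ_k| > c^k)` by `∑ P(log⁺ |φ₀| / log c > k) ≤ E[log⁺ |φ₀|] / log c + 1`.
By Borel–Cantelli, almost surely `|φ_k| ≤ c^k` for all large `k`, and the series is then dominated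
by the geometric series `∑ (c |z|)^k`.
-/

open MeasureTheory Filter

open scoped ENNReal

lemma exists_one_lt_mul_lt_one {r : ℝ} (hr : 0 ≤ r) (hr1 : r < 1) : ∃ c, 1 < c ∧ c * r < 1 := by
  obtain ⟨a, hra, ha1⟩ := exists_between hr1
  have ha : 0 < a := hr.trans_lt hra
  refine ⟨a⁻¹, one_lt_inv_iff₀.mpr ⟨ha, ha1⟩, ?_⟩
  rwa [inv_mul_lt_iff₀ ha, mul_one]

lemma summable_mul_pow_of_eventually_abs_le_pow {a : ℕ → ℝ} {c z : ℝ} (hc : 0 ≤ c)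
    (ha : ∀ᶠ k in atTop, |a k| ≤ c ^ k) (hcz : c * |z| < 1) :
    Summable fun k => a k * z ^ k := by
  refine (summable_geometric_of_lt_one (by positivity) hcz).of_norm_bounded_eventually_nat ?_
  filter_upwards [ha] with k hk
  rw [Real.norm_eq_abs, abs_mul, abs_pow, mul_pow]
  exact mul_le_mul_of_nonneg_right hk (by positivity)

section LogMoment

variable {Ω : Type*} [MeasurableSpace Ω] {μ : Measure Ω} [IsProbabilityMeasure μ]

lemma tsum_measure_pow_lt_abs_ne_top {X : Ω → ℝ}
    (hlog : Integrable (fun ω => max (Real.log |X ω|) 0) μ) {c : ℝ} (hc : 1 < c) :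
    ∑' k : ℕ, μ {ω | c ^ k < |X ω|} ≠ ∞ := by
  have hlogc : 0 < Real.log c := Real.log_pos hc
  set Y : Ω → ℝ := fun ω => max (Real.log |X ω|) 0 / Real.log c
  have hsubset (k : ℕ) : {ω | c ^ k < |X ω|} ⊆ {ω | Y ω ∈ Set.Ioi (k : ℝ)} := by
    intro ω hω
    have hk : k * Real.log c < Real.log |X ω| := by
      simpa only [Real.log_pow] using Real.log_lt_log (by positivity) hω
    exact (lt_div_iff₀ hlogc).mpr (hk.trans_le (le_max_left _ _))
  let : MeasureSpace Ω := ⟨μ⟩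
  have hY : ∑' k : ℕ, μ {ω | Y ω ∈ Set.Ioi (k : ℝ)} < ∞ :=
    ProbabilityTheory.tsum_prob_mem_Ioi_lt_top (hlog.div_const _)
      fun ω => div_nonneg (le_max_right _ _) hlogc.le
  exact ((ENNReal.tsum_le_tsum fun k => measure_mono (hsubset k)).trans_lt hY).ne

lemma ae_eventually_abs_le_pow_of_map_eq {φ : ℕ → Ω → ℝ} (hmeas : ∀ k, Measurable (φ k))
    (hid : ∀ k, Measure.map (φ k) μ = Measure.map (φ 0) μ)
    (hlog : Integrable (fun ω => max (Real.log |φ 0 ω|) 0) μ) {c : ℝ} (hc : 1 < c) :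
    ∀ᵐ ω ∂μ, ∀ᶠ k in atTop, |φ k ω| ≤ c ^ k := by
  have hsame (k : ℕ) : μ {ω | c ^ k < |φ k ω|} = μ {ω | c ^ k < |φ 0 ω|} :=
    ProbabilityTheory.IdentDistrib.measure_mem_eq
      ⟨(hmeas k).aemeasurable, (hmeas 0).aemeasurable, hid k⟩
      (measurableSet_Ioi.preimage measurable_abs)
  have hsum : ∑' k : ℕ, μ {ω | c ^ k < |φ k ω|} ≠ ∞ := by
    simpa only [hsame] using tsum_measure_pow_lt_abs_ne_top hlog hc
  filter_upwards [ae_eventually_notMem hsum] with ω hω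
  simpa only [Set.mem_ofPred_eq, not_lt] using hω

end LogMoment

/-- Identically distributed random variables with finite log-moment:
random power series converge a.s. for |z| < 1. -/
theorem random_power_series_converges
    {Ω : Type*} [MeasurableSpace Ω] (μ : Measure Ω) [IsProbabilityMeasure μ]
    (φ : ℕ → Ω → ℝ) (hmeas : ∀ k, Measurable (φ k))
    (hid : ∀ k, Measure.map (φ k) μ = Measure.map (φ 0) μ)
    (hlog : Integrable (fun ω => max (Real.log |φ 0 ω|) 0) μ) :
    ∀ z : ℝ, |z| < 1 →
      ∀ᵐ ω ∂μ, Summable (fun k : ℕ => φ (k + 1) ω * z ^ (k + 1)) := by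
  intro z hz
  obtain ⟨c, hc, hcz⟩ := exists_one_lt_mul_lt_one (abs_nonneg z) hz
  filter_upwards [ae_eventually_abs_le_pow_of_map_eq hmeas hid hlog hc] with ω hω
  exact (summable_nat_add_iff 1).mpr
    (summable_mul_pow_of_eventually_abs_le_pow (zero_le_one.trans hc.le) hω hcz)
end

section
/- For ϑ > 5, let τ²_quasi = (1/4)·(6(ϑ-2)(ϑ-3)/((ϑ-4)(ϑ-5)) - 1) and τ²_exp = 2(ϑ-2)/(ϑ-3) - 1. Then τ²_quasi > τ²_exp for all ϑ > 5. -/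
/-!
Both variance factors share the factor `ϑ - 1`: `τ²_exp = (ϑ - 1)/(ϑ - 3)` and
`τ²_quasi = (ϑ - 1)(5ϑ - 16)/(4(ϑ - 4)(ϑ - 5))`. After cancelling it and clearing the positive
denominators, the claim becomes `4(ϑ - 4)(ϑ - 5) < (5ϑ - 16)(ϑ - 3)`, i.e. `0 < ϑ² + 5ϑ - 32`,
which holds for `ϑ > 5`.
-/

lemma quasi_variance_factor_eq {ϑ : ℝ} (h4 : ϑ - 4 ≠ 0) (h5 : ϑ - 5 ≠ 0) :
    (1 / 4) * (6 * (ϑ - 2) * (ϑ - 3) / ((ϑ - 4) * (ϑ - 5)) - 1) =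
      (ϑ - 1) * (5 * ϑ - 16) / (4 * ((ϑ - 4) * (ϑ - 5))) := by
  field_simp
  ring

lemma exp_variance_factor_eq {ϑ : ℝ} (h3 : ϑ - 3 ≠ 0) :
    2 * (ϑ - 2) / (ϑ - 3) - 1 = (ϑ - 1) / (ϑ - 3) := by
  field_simp
  ring

lemma four_mul_sub_four_mul_sub_five_lt {ϑ : ℝ} (hϑ : 5 < ϑ) :
    4 * ((ϑ - 4) * (ϑ - 5)) < (5 * ϑ - 16) * (ϑ - 3) := by
  nlinarith

/-- Algebraic comparison of the asymptotic variance factors: for all `ϑ > 5`,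
`τ²_quasi = (1/4)(6(ϑ-2)(ϑ-3)/((ϑ-4)(ϑ-5)) - 1)` exceeds
`τ²_exp = 2(ϑ-2)/(ϑ-3) - 1`. -/
theorem tau_quasi_gt_tau_exp (ϑ : ℝ) (hϑ : 5 < ϑ) :
    (1 / 4) * (6 * (ϑ - 2) * (ϑ - 3) / ((ϑ - 4) * (ϑ - 5)) - 1) >
      2 * (ϑ - 2) / (ϑ - 3) - 1 := by
  have h1 : 0 < ϑ - 1 := by linarith
  have h3 : 0 < ϑ - 3 := by linarith
  have h4 : 0 < ϑ - 4 := by linarith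
  have h5 : 0 < ϑ - 5 := by linarith
  have h45 : 0 < 4 * ((ϑ - 4) * (ϑ - 5)) := by positivity
  rw [quasi_variance_factor_eq h4.ne' h5.ne', exp_variance_factor_eq h3.ne',
    gt_iff_lt, div_lt_div_iff₀ h3 h45, mul_assoc]
  exact mul_lt_mul_of_pos_left (four_mul_sub_four_mul_sub_five_lt hϑ) h1
end

section
/- Let (y_k) be identically distributed with E[|y₀²|^δ] < ∞ for some δ > 0, and let 0 < γρ < 1. Then for every t > 0 and integer M ≥ 1, P(∑_{i>M} (γρ)^i y_{-i}² > t/2) ≤ E[|y₀²|^δ] (1-(γρ)^{1/2})^{-δ} (1-(γρ)^{δ/2})^{-1} (t/2)^{-δ} (γρ)^{Mδ/2}. -/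
open MeasureTheory

/-- Tail bound for the truncated weighted series of squares (proof of
Lemma 3.7): for identically distributed `(y_k)` with `E |y₀²|^δ < ∞` and
`0 < r < 1` (with `r = γρ`), for every `t > 0` and `M ≥ 1`,
`P(∑_{i>M} r^i y_{-i}² > t/2) ≤ E|y₀²|^δ (1-r^{1/2})^{-δ} (1-r^{δ/2})^{-1}
(t/2)^{-δ} r^{Mδ/2}`. -/
theorem tail_bound_weighted_series
    {Ω : Type*} [MeasurableSpace Ω] (μ : Measure Ω) [IsProbabilityMeasure μ]
    (y : ℤ → Ω → ℝ) (hmeas : ∀ k, Measurable (y k))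
    (hid : ∀ k, Measure.map (y k) μ = Measure.map (y 0) μ)
    (δ : ℝ) (hδ : 0 < δ)
    (hmom : Integrable (fun ω => |(y 0 ω) ^ 2| ^ δ) μ)
    (r : ℝ) (hr0 : 0 < r) (hr1 : r < 1) :
    ∀ t : ℝ, 0 < t → ∀ M : ℕ, 1 ≤ M →
      (μ {ω | t / 2 <
          ∑' i : ℕ, r ^ (M + 1 + i) * (y (-(M + 1 + i : ℕ) : ℤ) ω) ^ 2}).toReal ≤
        (∫ ω, |(y 0 ω) ^ 2| ^ δ ∂μ) * (1 - r ^ ((1 : ℝ) / 2)) ^ (-δ) *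
          (1 - r ^ (δ / 2))⁻¹ * (t / 2) ^ (-δ) * r ^ ((M : ℝ) * δ / 2) := by
  intro t ht M hM
  have ht2 : 0 < t / 2 := by linarith
  set s : ℝ := r ^ ((1 : ℝ) / 2) with hs_def
  have hs0 : 0 < s := Real.rpow_pos_of_pos hr0 _
  have hs1 : s < 1 := Real.rpow_lt_one hr0.le hr1 (by norm_num)
  have hs1' : (0 : ℝ) < 1 - s := by linarith
  have hr_sq : ∀ k : ℕ, r ^ k = s ^ k * s ^ k := by
    intro k
    have hrs : r = s * s := by
      rw [hs_def, ← Real.rpow_add hr0]; norm_num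
    rw [hrs, mul_pow]
  set q : ℝ := s ^ δ with hq_def
  have hq0 : 0 < q := Real.rpow_pos_of_pos hs0 _
  have hq1 : q < 1 := Real.rpow_lt_one hs0.le hs1 hδ
  have hq1' : (0 : ℝ) < 1 - q := by linarith
  have hpow : ∀ k : ℕ, (s ^ k) ^ δ = q ^ k := by
    intro k
    rw [← Real.rpow_natCast s k, ← Real.rpow_mul hs0.le, mul_comm,
      Real.rpow_mul hs0.le, Real.rpow_natCast]
  set I : ℝ := ∫ ω, |(y 0 ω) ^ 2| ^ δ ∂μ with hI_def
  have hI0 : 0 ≤ I :=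
    integral_nonneg fun ω => Real.rpow_nonneg (abs_nonneg _) _
  set P : ℝ := t / 2 * (1 - s) with hP_def
  have hP0 : 0 < P := mul_pos ht2 hs1'
  set c : ℕ → ℝ := fun i => P * s ^ (M + 1 + i) with hc_def
  have hc0 : ∀ i, 0 < c i := fun i => mul_pos hP0 (pow_pos hs0 _)
  set g : ℕ → ℝ := fun i => I * P ^ (-δ) * q ^ (M + 1 + i) with hg_def
  have hg0 : ∀ i, 0 ≤ g i := fun i =>
    mul_nonneg (mul_nonneg hI0 (Real.rpow_nonneg hP0.le _)) (pow_nonneg hq0.le _)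
  -- union bound inclusion
  have hsub : {ω | t / 2 <
        ∑' i : ℕ, r ^ (M + 1 + i) * (y (-(M + 1 + i : ℕ) : ℤ) ω) ^ 2} ⊆
      ⋃ i : ℕ, {ω | c i < r ^ (M + 1 + i) * (y (-(M + 1 + i : ℕ) : ℤ) ω) ^ 2} := by
    intro ω hω
    simp only [Set.mem_setOf_eq] at hω
    by_contra h
    simp only [Set.mem_iUnion, Set.mem_setOf_eq, not_exists, not_lt] at h
    have hfnn : ∀ i : ℕ, 0 ≤ r ^ (M + 1 + i) * (y (-(M + 1 + i : ℕ) : ℤ) ω) ^ 2 :=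
      fun i => mul_nonneg (pow_nonneg hr0.le _) (sq_nonneg _)
    have hsum_c : Summable c := by
      have hce : c = fun i => (P * s ^ (M + 1)) * s ^ i := by
        funext i; simp only [hc_def, pow_add]; ring
      rw [hce]
      exact (summable_geometric_of_lt_one hs0.le hs1).mul_left _
    have hsf : Summable fun i : ℕ => r ^ (M + 1 + i) * (y (-(M + 1 + i : ℕ) : ℤ) ω) ^ 2 :=
      Summable.of_nonneg_of_le hfnn h hsum_c
    have htc : ∑' i, c i = t / 2 * s ^ (M + 1) := by
      have hce : c = fun i => (P * s ^ (M + 1)) * s ^ i := by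
        funext i; simp only [hc_def, pow_add]; ring
      rw [hce, tsum_mul_left, tsum_geometric_of_lt_one hs0.le hs1, hP_def]
      field_simp
    have hle : (∑' i, r ^ (M + 1 + i) * (y (-(M + 1 + i : ℕ) : ℤ) ω) ^ 2) ≤ ∑' i, c i :=
      Summable.tsum_le_tsum h hsf hsum_c
    have hsle : s ^ (M + 1) ≤ 1 := pow_le_one₀ hs0.le hs1.le
    rw [htc] at hle
    nlinarith
  -- per-index bound
  have key : ∀ i : ℕ,
      μ {ω | c i < r ^ (M + 1 + i) * (y (-(M + 1 + i : ℕ) : ℤ) ω) ^ 2} ≤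
        ENNReal.ofReal (g i) := by
    intro i
    set k : ℕ := M + 1 + i with hk_def
    set b : ℝ := P ^ δ / q ^ k with hb_def
    have hb0 : 0 < b := div_pos (Real.rpow_pos_of_pos hP0 _) (pow_pos hq0 _)
    have hS : MeasurableSet {x : ℝ | c i < r ^ k * x ^ 2} :=
      measurableSet_lt measurable_const (by fun_prop)
    have hmap : μ {ω | c i < r ^ k * (y (-(k : ℕ) : ℤ) ω) ^ 2} =
        μ ((y 0) ⁻¹' {x | c i < r ^ k * x ^ 2}) := by
      have h1 : {ω | c i < r ^ k * (y (-(k : ℕ) : ℤ) ω) ^ 2} =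
          (y (-(k : ℕ) : ℤ)) ⁻¹' {x | c i < r ^ k * x ^ 2} := rfl
      rw [h1, ← Measure.map_apply (hmeas _) hS, hid, Measure.map_apply (hmeas 0) hS]
    have hsubset : (y 0) ⁻¹' {x | c i < r ^ k * x ^ 2} ⊆
        {ω | b ≤ |(y 0 ω) ^ 2| ^ δ} := by
      intro ω hx
      simp only [Set.mem_preimage, Set.mem_setOf_eq] at hx ⊢
      set x : ℝ := y 0 ω with hx_def
      have h1 : P < x ^ 2 * s ^ k := by
        refine lt_of_mul_lt_mul_right ?_ (pow_pos hs0 k).le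
        calc P * s ^ k = c i := rfl
          _ < r ^ k * x ^ 2 := hx
          _ = (x ^ 2 * s ^ k) * s ^ k := by rw [hr_sq]; ring
      have h2 : P / s ^ k ≤ x ^ 2 := by
        rw [div_le_iff₀ (pow_pos hs0 k)]; linarith
      have h3 : (P / s ^ k) ^ δ ≤ (x ^ 2) ^ δ :=
        Real.rpow_le_rpow (by positivity) h2 hδ.le
      have h4 : (P / s ^ k) ^ δ = b := by
        rw [hb_def, Real.div_rpow hP0.le (pow_nonneg hs0.le _), hpow]
      rw [← h4, abs_of_nonneg (sq_nonneg x)]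
      exact h3
    have hmk := mul_meas_ge_le_integral_of_nonneg
      (μ := μ) (f := fun ω => |(y 0 ω) ^ 2| ^ δ)
      (Filter.Eventually.of_forall fun ω => Real.rpow_nonneg (abs_nonneg _) _) hmom b
    have htr : (μ {ω | b ≤ |(y 0 ω) ^ 2| ^ δ}).toReal ≤ I / b := by
      rw [le_div_iff₀ hb0]
      calc (μ {ω | b ≤ |(y 0 ω) ^ 2| ^ δ}).toReal * b
          = b * (μ {ω | b ≤ |(y 0 ω) ^ 2| ^ δ}).toReal := by ring
        _ ≤ I := hmk
    have hgi : I / b = g i := by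
      rw [hg_def, hb_def, Real.rpow_neg hP0.le]
      field_simp
      rfl
    calc μ {ω | c i < r ^ k * (y (-(k : ℕ) : ℤ) ω) ^ 2}
        = μ ((y 0) ⁻¹' {x | c i < r ^ k * x ^ 2}) := hmap
      _ ≤ μ {ω | b ≤ |(y 0 ω) ^ 2| ^ δ} := measure_mono hsubset
      _ = ENNReal.ofReal ((μ {ω | b ≤ |(y 0 ω) ^ 2| ^ δ}).toReal) :=
          (ENNReal.ofReal_toReal (measure_ne_top μ _)).symm
      _ ≤ ENNReal.ofReal (g i) := ENNReal.ofReal_le_ofReal (by rw [← hgi]; exact htr)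
  -- summability of g and its sum
  have hge : g = fun i => (I * P ^ (-δ) * q ^ (M + 1)) * q ^ i := by
    funext i; simp only [hg_def, pow_add]; ring
  have hg_sum : Summable g := by
    rw [hge]; exact (summable_geometric_of_lt_one hq0.le hq1).mul_left _
  have htg : ∑' i, g i = I * P ^ (-δ) * (q ^ (M + 1) * (1 - q)⁻¹) := by
    rw [hge, tsum_mul_left, tsum_geometric_of_lt_one hq0.le hq1]; ring
  -- total bound in ℝ≥0∞
  have htot : μ {ω | t / 2 <
        ∑' i : ℕ, r ^ (M + 1 + i) * (y (-(M + 1 + i : ℕ) : ℤ) ω) ^ 2} ≤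
      ENNReal.ofReal (∑' i, g i) := by
    calc μ {ω | t / 2 < ∑' i : ℕ, r ^ (M + 1 + i) * (y (-(M + 1 + i : ℕ) : ℤ) ω) ^ 2}
        ≤ μ (⋃ i : ℕ, {ω | c i < r ^ (M + 1 + i) * (y (-(M + 1 + i : ℕ) : ℤ) ω) ^ 2}) :=
          measure_mono hsub
      _ ≤ ∑' i, μ {ω | c i < r ^ (M + 1 + i) * (y (-(M + 1 + i : ℕ) : ℤ) ω) ^ 2} :=
          measure_iUnion_le _
      _ ≤ ∑' i, ENNReal.ofReal (g i) := ENNReal.tsum_le_tsum key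
      _ = ENNReal.ofReal (∑' i, g i) := (ENNReal.ofReal_tsum_of_nonneg hg0 hg_sum).symm
  have htoReal : (μ {ω | t / 2 <
        ∑' i : ℕ, r ^ (M + 1 + i) * (y (-(M + 1 + i : ℕ) : ℤ) ω) ^ 2}).toReal ≤
      ∑' i, g i :=
    ENNReal.toReal_le_of_le_ofReal (tsum_nonneg hg0) htot
  refine htoReal.trans ?_
  -- final real estimate
  have hq_r : r ^ (δ / 2) = q := by
    rw [hq_def, hs_def, ← Real.rpow_mul hr0.le, mul_comm, mul_one_div]
  have hqM : r ^ ((M : ℝ) * δ / 2) = q ^ M := by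
    rw [← hq_r, ← Real.rpow_natCast (r ^ (δ / 2)) M, ← Real.rpow_mul hr0.le]
    ring_nf
  have hPd : P ^ (-δ) = (t / 2) ^ (-δ) * (1 - s) ^ (-δ) := by
    rw [hP_def, Real.mul_rpow ht2.le hs1'.le]
  rw [htg, hq_r, hqM, hPd]
  have hmono : q ^ (M + 1) ≤ q ^ M := pow_le_pow_of_le_one hq0.le hq1.le (by omega)
  have hnn : 0 ≤ I * (1 - s) ^ (-δ) * (t / 2) ^ (-δ) * (1 - q)⁻¹ :=
    mul_nonneg (mul_nonneg (mul_nonneg hI0 (Real.rpow_nonneg hs1'.le _))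
      (Real.rpow_nonneg ht2.le _)) (inv_nonneg.mpr hq1'.le)
  calc I * ((t / 2) ^ (-δ) * (1 - s) ^ (-δ)) * (q ^ (M + 1) * (1 - q)⁻¹)
      = (I * (1 - s) ^ (-δ) * (t / 2) ^ (-δ) * (1 - q)⁻¹) * q ^ (M + 1) := by ring
    _ ≤ (I * (1 - s) ^ (-δ) * (t / 2) ^ (-δ) * (1 - q)⁻¹) * q ^ M :=
        mul_le_mul_of_nonneg_left hmono hnn
    _ = I * (1 - s) ^ (-δ) * (1 - q)⁻¹ * (t / 2) ^ (-δ) * q ^ M := by ring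
end
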